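/- arXiv:1407.3608 — 9 statements merged into one kernel-verified Lean document; each statement's English description precedes it below -/
import Mathlib

section
/- Let (X,d) be a (possibly asymmetric) metric space, b ∈ X, and let (z_n) be a forward admissible sequence in X. Then the sequence (d(b, z_n)) converges to a limit in ℝ. Moreover, if (z_n) and (z'_n) are equivalent forward admissible sequences, then lim d(b, z_n) = lim d(b, z'_n). -/
/-!
Write `a n = d(b, z n)`. The triangle inequality `d(b, z k) ≤ d(b, z n) + d(z n, z k)` shows that
forward admissibility makes `a` almost non-increasing: for every `ε > 0` and all late `n`,
eventually `a k ≤ a n + ε`. Hence `limsup a ≤ a n + ε` for late `n`, so `limsup a ≤ liminf a + ε`,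
and `a`, bounded below by `0`, converges. For equivalent sequences, `z` and `z'` are the even and
odd subsequences of their forward admissible interlace, so they share its limit.
-/

open Filter

/-- A sequence in a (possibly asymmetric) metric space is forward admissible if for all `ε > 0`
there exists `N` such that for all `n ≥ N` there exists `K` with `d(x_n, x_k) ≤ ε` for `k ≥ K`. -/
def FwdAdm {X : Type*} (d : X → X → ℝ) (x : ℕ → X) : Prop :=
  ∀ ε > (0 : ℝ), ∃ N : ℕ, ∀ n ≥ N, ∃ K : ℕ, ∀ k ≥ K, d (x n) (x k) ≤ ε

/-- The interlace of two sequences: `z_{2n} = x_n`, `z_{2n+1} = y_n`. -/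
def interlace {X : Type*} (x y : ℕ → X) : ℕ → X :=
  fun n => if n % 2 = 0 then x (n / 2) else y (n / 2)

open Topology

theorem exists_tendsto_of_eventually_le_add {ι : Type*} {l : Filter ι} [l.NeBot] {a : ι → ℝ}
    (hbdd : IsBoundedUnder (· ≥ ·) l a) (h : ∀ ε > 0, ∀ᶠ n in l, ∀ᶠ k in l, a k ≤ a n + ε) :
    ∃ c, Tendsto a l (𝓝 c) := by
  have hbdd' : IsBoundedUnder (· ≤ ·) l a := by
    obtain ⟨n, hn⟩ := (h 1 one_pos).exists
    exact ⟨a n + 1, hn⟩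
  have hlimsup : ∀ ε > 0, limsup a l - ε ≤ liminf a l := fun ε hε =>
    le_liminf_of_le hbdd'.isCoboundedUnder_ge <| (h ε hε).mono fun n hn => by
      have := limsup_le_of_le hbdd.isCoboundedUnder_le hn
      linarith
  have heq : liminf a l = limsup a l :=
    le_antisymm (liminf_le_limsup hbdd' hbdd)
      (le_of_forall_pos_le_add fun ε hε => by linarith [hlimsup ε hε])
  exact ⟨_, tendsto_of_liminf_eq_limsup heq rfl hbdd' hbdd⟩

theorem FwdAdm.eventually_eventually_le {X : Type*} {d : X → X → ℝ} {x : ℕ → X} (hx : FwdAdm d x)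
    {ε : ℝ} (hε : 0 < ε) : ∀ᶠ n in atTop, ∀ᶠ k in atTop, d (x n) (x k) ≤ ε := by
  obtain ⟨N, hN⟩ := hx ε hε
  filter_upwards [eventually_ge_atTop N] with n hn
  obtain ⟨K, hK⟩ := hN n hn
  exact eventually_atTop.2 ⟨K, hK⟩

theorem FwdAdm.exists_tendsto {X : Type*} {d : X → X → ℝ} (hnonneg : ∀ x y, 0 ≤ d x y)
    (htri : ∀ x y z, d x z ≤ d x y + d y z) {x : ℕ → X} (hx : FwdAdm d x) (b : X) :
    ∃ c, Tendsto (fun n => d b (x n)) atTop (𝓝 c) := by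
  refine exists_tendsto_of_eventually_le_add
    ⟨0, eventually_map.2 (.of_forall fun n => hnonneg b (x n))⟩ fun ε hε => ?_
  filter_upwards [hx.eventually_eventually_le hε] with n hn
  filter_upwards [hn] with k hk
  linarith [htri b (x n) (x k)]

theorem interlace_comp_two_mul {X : Type*} (x y : ℕ → X) :
    interlace x y ∘ (2 * ·) = x := by
  ext n
  simp [interlace]

theorem interlace_comp_two_mul_add_one {X : Type*} (x y : ℕ → X) :
    interlace x y ∘ (2 * · + 1) = y := by
  ext n
  simp [interlace, Nat.add_mod, Nat.add_div]

theorem Filter.Tendsto.of_interlace {X α : Type*} {f : X → α} {l : Filter α} {x y : ℕ → X}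
    (h : Tendsto (f ∘ interlace x y) atTop l) :
    Tendsto (f ∘ x) atTop l ∧ Tendsto (f ∘ y) atTop l := by
  have heven : StrictMono (2 * · : ℕ → ℕ) := fun m n hmn => by simp only; omega
  have hodd : StrictMono (2 * · + 1 : ℕ → ℕ) := fun m n hmn => by simp only; omega
  constructor
  · simpa only [Function.comp_assoc, interlace_comp_two_mul] using h.comp heven.tendsto_atTop
  · simpa only [Function.comp_assoc, interlace_comp_two_mul_add_one] using
      h.comp hodd.tendsto_atTop

theorem stmt_1_general {X : Type*} (d : X → X → ℝ)
    (hnonneg : ∀ x y, 0 ≤ d x y)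
    (htri : ∀ x y z, d x z ≤ d x y + d y z)
    (b : X) (z : ℕ → X) (hz : FwdAdm d z) :
    (∃ c : ℝ, Tendsto (fun n => d b (z n)) atTop (nhds c)) ∧
    ∀ z' : ℕ → X, FwdAdm d z' → FwdAdm d (interlace z z') →
      ∀ c c' : ℝ, Tendsto (fun n => d b (z n)) atTop (nhds c) →
        Tendsto (fun n => d b (z' n)) atTop (nhds c') → c = c' := by
  refine ⟨hz.exists_tendsto hnonneg htri b, fun z' _ hzz' c c' hc hc' => ?_⟩
  obtain ⟨e, he⟩ := hzz'.exists_tendsto hnonneg htri b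
  obtain ⟨hze, hz'e⟩ := Tendsto.of_interlace (f := d b) he
  exact (tendsto_nhds_unique hc hze).trans (tendsto_nhds_unique hc' hz'e).symm

/-- For a forward admissible sequence `(z_n)` in an asymmetric metric space with basepoint `b`,
the sequence `d(b, z_n)` converges; moreover equivalent forward admissible sequences (i.e. whose
interlace is forward admissible) give the same limit. -/
theorem stmt_1 {X : Type*} (d : X → X → ℝ)
    (hnonneg : ∀ x y, 0 ≤ d x y)
    (hsep : ∀ x y, d x y = 0 ↔ x = y)
    (htri : ∀ x y z, d x z ≤ d x y + d y z)
    (b : X) (z : ℕ → X) (hz : FwdAdm d z) :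
    (∃ c : ℝ, Tendsto (fun n => d b (z n)) atTop (nhds c)) ∧
    ∀ z' : ℕ → X, FwdAdm d z' → FwdAdm d (interlace z z') →
      ∀ c c' : ℝ, Tendsto (fun n => d b (z n)) atTop (nhds c) →
        Tendsto (fun n => d b (z' n)) atTop (nhds c') → c = c' :=
  stmt_1_general d hnonneg htri b z hz
end

section
/- Let (X,d) be a quasi-proper asymmetric metric space with basepoint b, and for z ∈ X let ψ_z(x) = d(x,z) − d(b,z). If (z_n) and (z'_n) are equivalent forward admissible sequences in X such that (ψ_{z_n}) converges pointwise to ψ and (ψ_{z'_n}) converges pointwise to ψ', then ψ = ψ'. -/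
open Filter

/-!
For a forward admissible sequence `(u_n)` the triangle inequality gives, for every `ε > 0` and
all large `n`, `d(x, u_k) ≤ d(x, u_n) + ε` for all large `k`; a real sequence bounded below with
this property converges, so `d(x, u_n)` has a limit for every `x`. Applied to the interlace of
`z` and `z'`, whose even and odd subsequences are `z` and `z'`, this gives one common limit of
`d(x, z_n)` and `d(x, z'_n)`, hence `ψ(x) = ψ'(x)`.
-/

theorem Real.exists_tendsto_of_bddBelow_of_eventually_le_add {f : ℕ → ℝ}
    (hbdd : BddBelow (Set.range f))
    (h : ∀ ε > 0, ∀ᶠ n in atTop, ∀ᶠ k in atTop, f k ≤ f n + ε) :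
    ∃ L, Tendsto f atTop (nhds L) := by
  have hbelow : IsBoundedUnder (· ≥ ·) atTop f := hbdd.isBoundedUnder_of_range
  have habove : IsBoundedUnder (· ≤ ·) atTop f := by
    obtain ⟨n, hn⟩ := (h 1 one_pos).exists
    exact ⟨f n + 1, hn⟩
  refine ⟨liminf f atTop, tendsto_of_liminf_eq_limsup rfl ?_ habove hbelow⟩
  refine le_antisymm (le_of_forall_pos_le_add fun ε hε => ?_) (liminf_le_limsup habove hbelow)
  have hclose : ∃ᶠ n in atTop, f n < liminf f atTop + ε / 2 :=
    frequently_lt_of_liminf_lt habove.isCoboundedUnder_ge (by linarith)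
  obtain ⟨n, hn, hk⟩ := (hclose.and_eventually (h (ε / 2) (half_pos hε))).exists
  refine limsup_le_of_le hbelow.isCoboundedUnder_le (hk.mono fun k hfk => ?_)
  linarith

theorem FwdAdm.exists_tendsto_dist {X : Type*} {d : X → X → ℝ}
    (hnonneg : ∀ x y, 0 ≤ d x y) (htri : ∀ x y z, d x z ≤ d x y + d y z)
    {u : ℕ → X} (hu : FwdAdm d u) (x : X) :
    ∃ L, Tendsto (fun n => d x (u n)) atTop (nhds L) := by
  refine Real.exists_tendsto_of_bddBelow_of_eventually_le_add
    ⟨0, by rintro _ ⟨n, rfl⟩; exact hnonneg x (u n)⟩ fun ε hε => ?_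
  obtain ⟨N, hN⟩ := hu ε hε
  refine eventually_atTop.2 ⟨N, fun n hn => ?_⟩
  obtain ⟨K, hK⟩ := hN n hn
  exact eventually_atTop.2 ⟨K, fun k hk => (htri x (u n) (u k)).trans (by linarith [hK k hk])⟩

section Interlace

variable {X : Type*} (x y : ℕ → X)

@[simp]
theorem interlace_two_mul (n : ℕ) : interlace x y (2 * n) = x n := by
  simp [interlace]

@[simp]
theorem interlace_two_mul_add_one (n : ℕ) : interlace x y (2 * n + 1) = y n := by
  simp [interlace, Nat.add_mod, Nat.add_div_of_dvd_right]

variable {α : Type*} {f : X → α} {l : Filter α}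

theorem Filter.Tendsto.of_interlace_left (h : Tendsto (fun n => f (interlace x y n)) atTop l) :
    Tendsto (fun n => f (x n)) atTop l := by
  simpa [Function.comp_def] using
    h.comp (StrictMono.tendsto_atTop fun a b (hab : a < b) => by omega :
      Tendsto (2 * ·) atTop atTop)

theorem Filter.Tendsto.of_interlace_right (h : Tendsto (fun n => f (interlace x y n)) atTop l) :
    Tendsto (fun n => f (y n)) atTop l := by
  simpa [Function.comp_def] using
    h.comp (StrictMono.tendsto_atTop fun a b (hab : a < b) => by omega :
      Tendsto (2 * · + 1) atTop atTop)

end Interlace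

theorem stmt_2_general {X : Type*} (d : X → X → ℝ)
    (hnonneg : ∀ x y, 0 ≤ d x y)
    (htri : ∀ x y z, d x z ≤ d x y + d y z)
    (b : X) (z z' : ℕ → X)
    (hequiv : FwdAdm d (interlace z z'))
    (ψ ψ' : X → ℝ)
    (hψ : ∀ x, Tendsto (fun n => d x (z n) - d b (z n)) atTop (nhds (ψ x)))
    (hψ' : ∀ x, Tendsto (fun n => d x (z' n) - d b (z' n)) atTop (nhds (ψ' x))) :
    ψ = ψ' := by
  choose M hM using hequiv.exists_tendsto_dist hnonneg htri
  funext x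
  have hz : ψ x = M x - M b := tendsto_nhds_unique (hψ x)
    ((hM x).of_interlace_left.sub (hM b).of_interlace_left)
  have hz' : ψ' x = M x - M b := tendsto_nhds_unique (hψ' x)
    ((hM x).of_interlace_right.sub (hM b).of_interlace_right)
  rw [hz, hz']

/-- In a quasi-proper asymmetric metric space (geodesic asymmetric metric whose symmetrization
is a proper metric, with symmetric convergence of sequences), if `(z_n)` and `(z'_n)` are
equivalent forward admissible sequences and `ψ_{z_n} → ψ`, `ψ_{z'_n} → ψ'` pointwise, where
`ψ_z(x) = d(x,z) - d(b,z)`, then `ψ = ψ'`. -/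
theorem stmt_2 {X : Type*} [MetricSpace X] [ProperSpace X] (d : X → X → ℝ)
    (hnonneg : ∀ x y, 0 ≤ d x y)
    (hsep : ∀ x y, d x y = 0 ↔ x = y)
    (htri : ∀ x y z, d x z ≤ d x y + d y z)
    (hsym : ∀ x y : X, dist x y = d x y + d y x)
    (hgeo : ∀ x y : X, ∃ γ : ℝ → X, γ 0 = x ∧ γ (d x y) = y ∧
      ∀ s t : ℝ, 0 ≤ s → s ≤ t → t ≤ d x y → d (γ s) (γ t) = t - s)
    (hconv : ∀ (x : X) (u : ℕ → X),
      Tendsto (fun n => d (u n) x) atTop (nhds 0) ↔ Tendsto (fun n => d x (u n)) atTop (nhds 0))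
    (b : X) (z z' : ℕ → X) (hz : FwdAdm d z) (hz' : FwdAdm d z')
    (hequiv : FwdAdm d (interlace z z'))
    (ψ ψ' : X → ℝ)
    (hψ : ∀ x, Tendsto (fun n => d x (z n) - d b (z n)) atTop (nhds (ψ x)))
    (hψ' : ∀ x, Tendsto (fun n => d x (z' n) - d b (z' n)) atTop (nhds (ψ' x))) :
    ψ = ψ' :=
  stmt_2_general d hnonneg htri b z z' hequiv ψ ψ' hψ hψ'
end

section
/- Let (X,d) be a (possibly asymmetric) metric space with basepoint b, and for z ∈ X let ψ_z(x) = d(x,z) − d(b,z). Let (z_n) and (z'_n) be forward admissible sequences such that (ψ_{z_n}) and (ψ_{z'_n}) converge pointwise to the same function ψ. Then (z_n) and (z'_n) are equivalent, i.e. the map from the forward metric completion to the horoboundary functions is injective. -/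
/-!
Pointwise convergence of the differences `d(x, z_j) - d(y, z_j)` to `ψ x - ψ y` forces
`ψ x ≤ ψ y + δ` whenever `d(x, z_j) ≤ δ` eventually, since `d(y, z_j) ≥ 0`. Along a forward
admissible `(z_n)` this makes `ψ (z_n)` almost minimal. Hence, for `N'` with `d(z'_{N'}, z'_k)`
eventually small,
`d(z_n, z'_k) ≈ d(z'_{N'}, z'_k) + ψ (z_n) - ψ (z'_{N'})` is eventually small as well; the second
half follows by symmetry.
-/

open Filter

/-- `HasC d x y c` says that `c = c((x_n),(y_n))`: for all `ε > 0` there is `N` such that for all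
`n ≥ N` there is `K` such that `|d(x_n, y_k) - c| ≤ ε` for all `k ≥ K`. -/
def HasC {X : Type*} (d : X → X → ℝ) (x y : ℕ → X) (c : ℝ) : Prop :=
  ∀ ε > (0 : ℝ), ∃ N : ℕ, ∀ n ≥ N, ∃ K : ℕ, ∀ k ≥ K, |d (x n) (y k) - c| ≤ ε

open Topology

namespace FwdAdm

variable {X : Type*} {d : X → X → ℝ}

lemma eventually_eventually_le_s3 {x : ℕ → X} (hx : FwdAdm d x) {ε : ℝ} (hε : 0 < ε) :
    ∀ᶠ n in atTop, ∀ᶠ k in atTop, d (x n) (x k) ≤ ε := by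
  simpa only [eventually_atTop] using hx ε hε

end FwdAdm

section Horofunction

variable {X : Type*} {d : X → X → ℝ} {b : X} {z : ℕ → X} {ψ : X → ℝ}

lemma tendsto_dist_sub_dist
    (hψ : ∀ x, Tendsto (fun n => d x (z n) - d b (z n)) atTop (𝓝 (ψ x))) (x y : X) :
    Tendsto (fun n => d x (z n) - d y (z n)) atTop (𝓝 (ψ x - ψ y)) := by
  simpa only [sub_sub_sub_cancel_right] using (hψ x).sub (hψ y)

lemma le_add_of_eventually_dist_le (hnonneg : ∀ x y, 0 ≤ d x y)
    (hψ : ∀ x, Tendsto (fun n => d x (z n) - d b (z n)) atTop (𝓝 (ψ x)))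
    {x : X} {δ : ℝ} (hx : ∀ᶠ n in atTop, d x (z n) ≤ δ) (y : X) :
    ψ x ≤ ψ y + δ := by
  have : ψ x - ψ y ≤ δ := le_of_tendsto (tendsto_dist_sub_dist hψ x y) <| hx.mono fun n hn => by
    linarith [hnonneg y (z n)]
  linarith

lemma hasC_zero_of_tendsto (hnonneg : ∀ x y, 0 ≤ d x y) {z' : ℕ → X}
    (hz : FwdAdm d z) (hz' : FwdAdm d z')
    (hψ : ∀ x, Tendsto (fun n => d x (z n) - d b (z n)) atTop (𝓝 (ψ x)))
    (hψ' : ∀ x, Tendsto (fun n => d x (z' n) - d b (z' n)) atTop (𝓝 (ψ x))) :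
    HasC d z z' 0 := by
  intro ε hε
  have hδ : 0 < ε / 3 := by positivity
  obtain ⟨N', hN'⟩ := (hz'.eventually_eventually_le_s3 hδ).exists
  refine eventually_atTop.mp ((hz.eventually_eventually_le_s3 hδ).mono fun n hn => ?_)
  have hψn : ψ (z n) ≤ ψ (z' N') + ε / 3 := le_add_of_eventually_dist_le hnonneg hψ hn _
  have hclose : ∀ᶠ k in atTop, d (z n) (z' k) - d (z' N') (z' k) < ψ (z n) - ψ (z' N') + ε / 3 :=
    (tendsto_dist_sub_dist hψ' _ _).eventually (gt_mem_nhds (by linarith))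
  refine eventually_atTop.mp ((hclose.and hN').mono fun k ⟨hk, hk'⟩ => ?_)
  rw [sub_zero, abs_of_nonneg (hnonneg _ _)]
  linarith

end Horofunction

theorem stmt_3_general {X : Type*} (d : X → X → ℝ)
    (hnonneg : ∀ x y, 0 ≤ d x y)
    (b : X) (z z' : ℕ → X) (hz : FwdAdm d z) (hz' : FwdAdm d z')
    (ψ : X → ℝ)
    (hψ : ∀ x, Tendsto (fun n => d x (z n) - d b (z n)) atTop (nhds (ψ x)))
    (hψ' : ∀ x, Tendsto (fun n => d x (z' n) - d b (z' n)) atTop (nhds (ψ x))) :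
    HasC d z z' 0 ∧ HasC d z' z 0 :=
  ⟨hasC_zero_of_tendsto hnonneg hz hz' hψ hψ', hasC_zero_of_tendsto hnonneg hz' hz hψ' hψ⟩

/-- If two forward admissible sequences `(z_n)`, `(z'_n)` in a (possibly asymmetric) metric space
have associated functions `ψ_{z_n}(x) = d(x,z_n) - d(b,z_n)` converging pointwise to the same
function `ψ`, then the two sequences are equivalent, i.e.
`c((z_n),(z'_n)) = c((z'_n),(z_n)) = 0`. -/
theorem stmt_3 {X : Type*} (d : X → X → ℝ)
    (hnonneg : ∀ x y, 0 ≤ d x y)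
    (hsep : ∀ x y, d x y = 0 ↔ x = y)
    (htri : ∀ x y z, d x z ≤ d x y + d y z)
    (b : X) (z z' : ℕ → X) (hz : FwdAdm d z) (hz' : FwdAdm d z')
    (ψ : X → ℝ)
    (hψ : ∀ x, Tendsto (fun n => d x (z n) - d b (z n)) atTop (nhds (ψ x)))
    (hψ' : ∀ x, Tendsto (fun n => d x (z' n) - d b (z' n)) atTop (nhds (ψ x))) :
    HasC d z z' 0 ∧ HasC d z' z 0 :=
  stmt_3_general d hnonneg b z z' hz hz' ψ hψ hψ'
end

section
/- Let (X,d) be an asymmetric metric space with basepoint b. Suppose z = (z_n) and z^k = (z^k_n) (k ∈ ℕ) are forward admissible sequences representing points of the forward completion, with associated limit horofunctions ψ_z and ψ_{z^k} (pointwise limits of ψ_{z_n} and ψ_{z^k_n} respectively). If the extended distances satisfy c(z^k, z) → 0 and c(z, z^k) → 0 as k → ∞, then ψ_{z^k} converges to ψ_z uniformly on X. -/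
/-!
Comparing `d(x, u_n) - d(b, u_n)` with `d(x, v_m) - d(b, v_j)` by the triangle inequality
through `v_m` and through `u_n` costs `d(v_m, u_n) + d(u_n, v_j) ≈ c(v, u) + c(u, v)`.
The mismatch `d(b, v_m) - d(b, v_j)` is made small for all large `j` by taking `m` an almost
minimiser of the tail of `n ↦ d(b, v_n)`. Hence the horofunction limits along `u` and `v`
differ by at most `c(u, v) + c(v, u)` everywhere, and this bound tends to `0`.
-/

open Filter Topology

lemma exists_almost_min_of_bddBelow {g : ℕ → ℝ} (hg : BddBelow (Set.range g)) {δ : ℝ}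
    (hδ : 0 < δ) (T : ℕ) : ∃ m ≥ T, ∀ j ≥ T, g m ≤ g j + δ := by
  have hne : (g '' Set.Ici T).Nonempty := ⟨g T, T, le_refl T, rfl⟩
  have hbdd : BddBelow (g '' Set.Ici T) := hg.mono (Set.image_subset_range g _)
  obtain ⟨_, ⟨m, hmT, rfl⟩, hm⟩ := Real.lt_sInf_add_pos hne hδ
  exact ⟨m, hmT, fun j hj => by linarith [csInf_le hbdd ⟨j, hj, rfl⟩]⟩

lemma HasC.eventually {X : Type*} {d : X → X → ℝ} {x y : ℕ → X} {c ε : ℝ} (h : HasC d x y c)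
    (hε : 0 < ε) : ∀ᶠ n in atTop, ∀ᶠ k in atTop, |d (x n) (y k) - c| ≤ ε := by
  obtain ⟨N, hN⟩ := h ε hε
  exact eventually_atTop.2 ⟨N, fun n hn => eventually_atTop.2 (hN n hn)⟩

lemma horoLimit_le_add_hasC {X : Type*} (d : X → X → ℝ) (hnonneg : ∀ x y, 0 ≤ d x y)
    (htri : ∀ x y z, d x z ≤ d x y + d y z) (b x : X) {u v : ℕ → X} {cu cv A B : ℝ}
    (hcu : HasC d u v cu) (hcv : HasC d v u cv)
    (hA : Tendsto (fun n => d x (u n) - d b (u n)) atTop (𝓝 A))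
    (hB : Tendsto (fun n => d x (v n) - d b (v n)) atTop (𝓝 B)) :
    A ≤ B + (cu + cv) := by
  refine le_of_forall_pos_le_add fun ε hε => ?_
  have hδ : 0 < ε / 5 := by linarith
  obtain ⟨T, hT⟩ := ((hcv.eventually hδ).and (Metric.tendsto_nhds.1 hB _ hδ)).exists_forall_of_atTop
  obtain ⟨m, hmT, hm⟩ := exists_almost_min_of_bddBelow
    (g := fun n => d b (v n)) ⟨0, by rintro _ ⟨n, rfl⟩; exact hnonneg b (v n)⟩ hδ T
  obtain ⟨hvu, hBm⟩ := hT m hmT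
  obtain ⟨n, hvun, hAn, huv⟩ :=
    (hvu.and ((Metric.tendsto_nhds.1 hA _ hδ).and (hcu.eventually hδ))).exists
  obtain ⟨j, hjT, huvj⟩ := ((eventually_ge_atTop T).and huv).exists
  have hBm' := abs_lt.1 (Real.dist_eq _ _ ▸ hBm)
  have hAn' := abs_lt.1 (Real.dist_eq _ _ ▸ hAn)
  have hvun' := abs_le.1 hvun
  have huvj' := abs_le.1 huvj
  linarith [htri x (v m) (u n), htri b (u n) (v j), hm j hjT]

lemma abs_horoLimit_sub_le_hasC {X : Type*} (d : X → X → ℝ) (hnonneg : ∀ x y, 0 ≤ d x y)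
    (htri : ∀ x y z, d x z ≤ d x y + d y z) (b x : X) {u v : ℕ → X} {cu cv A B : ℝ}
    (hcu : HasC d u v cu) (hcv : HasC d v u cv)
    (hA : Tendsto (fun n => d x (u n) - d b (u n)) atTop (𝓝 A))
    (hB : Tendsto (fun n => d x (v n) - d b (v n)) atTop (𝓝 B)) :
    |A - B| ≤ cu + cv :=
  abs_sub_le_iff.2
    ⟨by linarith [horoLimit_le_add_hasC d hnonneg htri b x hcu hcv hA hB],
     by linarith [horoLimit_le_add_hasC d hnonneg htri b x hcv hcu hB hA]⟩

theorem stmt_4_general {X : Type*} (d : X → X → ℝ)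
    (hnonneg : ∀ x y, 0 ≤ d x y)
    (htri : ∀ x y z, d x z ≤ d x y + d y z)
    (b : X) (z : ℕ → X) (zk : ℕ → ℕ → X)
    (ψ : X → ℝ) (ψk : ℕ → X → ℝ)
    (hψ : ∀ x, Tendsto (fun n => d x (z n) - d b (z n)) atTop (nhds (ψ x)))
    (hψk : ∀ k x, Tendsto (fun n => d x (zk k n) - d b (zk k n)) atTop (nhds (ψk k x)))
    (c c' : ℕ → ℝ)
    (hc : ∀ k, HasC d (zk k) z (c k)) (hc' : ∀ k, HasC d z (zk k) (c' k))
    (hc0 : Tendsto c atTop (nhds 0)) (hc'0 : Tendsto c' atTop (nhds 0)) :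
    ∀ ε > (0 : ℝ), ∃ K : ℕ, ∀ k ≥ K, ∀ x : X, |ψk k x - ψ x| ≤ ε := by
  intro ε hε
  have hsum : Tendsto (fun k => c k + c' k) atTop (𝓝 0) := by simpa using hc0.add hc'0
  obtain ⟨K, hK⟩ := (hsum.eventually (eventually_le_nhds hε)).exists_forall_of_atTop
  exact ⟨K, fun k hk x =>
    (abs_horoLimit_sub_le_hasC d hnonneg htri b x (hc k) (hc' k) (hψk k x) (hψ x)).trans (hK k hk)⟩

/-- If `z` and `z^k` are forward admissible sequences with associated limit horofunctions `ψ` and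
`ψk k` (pointwise limits of `x ↦ d(x, z_n) - d(b, z_n)`), and the extended distances satisfy
`c(z^k, z) → 0` and `c(z, z^k) → 0` as `k → ∞`, then `ψ_{z^k} → ψ_z` uniformly on `X`. -/
theorem stmt_4 {X : Type*} (d : X → X → ℝ)
    (hnonneg : ∀ x y, 0 ≤ d x y)
    (hsep : ∀ x y, d x y = 0 ↔ x = y)
    (htri : ∀ x y z, d x z ≤ d x y + d y z)
    (b : X) (z : ℕ → X) (zk : ℕ → ℕ → X)
    (hz : FwdAdm d z) (hzk : ∀ k, FwdAdm d (zk k))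
    (ψ : X → ℝ) (ψk : ℕ → X → ℝ)
    (hψ : ∀ x, Tendsto (fun n => d x (z n) - d b (z n)) atTop (nhds (ψ x)))
    (hψk : ∀ k x, Tendsto (fun n => d x (zk k n) - d b (zk k n)) atTop (nhds (ψk k x)))
    (c c' : ℕ → ℝ)
    (hc : ∀ k, HasC d (zk k) z (c k)) (hc' : ∀ k, HasC d z (zk k) (c' k))
    (hc0 : Tendsto c atTop (nhds 0)) (hc'0 : Tendsto c' atTop (nhds 0)) :
    ∀ ε > (0 : ℝ), ∃ K : ℕ, ∀ k ≥ K, ∀ x : X, |ψk k x - ψ x| ≤ ε :=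
  stmt_4_general d hnonneg htri b z zk ψ ψk hψ hψk c c' hc hc' hc0 hc'0
end

section
/- Let (X,d) be an asymmetric metric space and let γ' : ℝ≥0 → X be a path such that for a fixed sequence of points γ'(n) (n ∈ ℕ) one has: (i) n − 1/n ≤ d(γ'(0), γ'(n)) ≤ n + 1/n for all n ≥ 1, and (ii) n − k − 2/k ≤ d(γ'(k), γ'(n)) ≤ n − k + 2/k for all 1 ≤ k < n, and γ' restricted to [n, n+1] is a geodesic from γ'(n) to γ'(n+1). Then γ' is an almost geodesic ray: for all ε > 0 there exists t_0 such that for all t_0 ≤ s ≤ t, |d(γ'(0), γ'(s)) + d(γ'(s), γ'(t)) − t| ≤ ε. -/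
/-!
On each piece `[k, k+1]` the path is a constant-speed geodesic whose speed `d(γ k, γ (k+1))`
lies within `2/k` of `1`, so `d(γ x, γ y)` is within `2/k` of `y - x` there. For `m = ⌊s⌋ ≥ 1`,
the triangle inequality through the integer points `m`, `m + 1`, `⌊t⌋`, `⌊t⌋ + 1` then puts
`d(γ 0, γ s)` within `3/m` of `s` and `d(γ s, γ t)` within `6/m` of `t - s`.
-/

section AlmostGeodesic

variable {X : Type*} {d : X → X → ℝ} {γ : ℝ → X}

def ZeroDistBounds (d : X → X → ℝ) (γ : ℝ → X) : Prop :=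
  ∀ n : ℕ, 1 ≤ n → (n : ℝ) - 1 / n ≤ d (γ 0) (γ n) ∧ d (γ 0) (γ n) ≤ (n : ℝ) + 1 / n

def NatDistBounds (d : X → X → ℝ) (γ : ℝ → X) : Prop :=
  ∀ k n : ℕ, 1 ≤ k → k < n →
    (n : ℝ) - k - 2 / k ≤ d (γ k) (γ n) ∧ d (γ k) (γ n) ≤ (n : ℝ) - k + 2 / k

def GeodesicOnUnitPieces (d : X → X → ℝ) (γ : ℝ → X) : Prop :=
  ∀ n : ℕ, ∀ u v : ℝ, (n : ℝ) ≤ u → u ≤ v → v ≤ (n : ℝ) + 1 →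
    d (γ u) (γ v) = (v - u) * d (γ n) (γ ((n : ℝ) + 1))

theorem abs_dist_sub_length_le_of_mem_piece
    (hmid : NatDistBounds d γ)
    (hgeo : GeodesicOnUnitPieces d γ)
    {k : ℕ} (hk : 1 ≤ k) {x y : ℝ} (hx : k ≤ x) (hxy : x ≤ y) (hy : y ≤ k + 1) :
    |d (γ x) (γ y) - (y - x)| ≤ 2 / k := by
  have hspeed := hmid k (k + 1) hk k.lt_succ_self
  push_cast at hspeed
  have hspeed' : |d (γ k) (γ (k + 1)) - 1| ≤ 2 / k :=
    abs_le.2 ⟨by linarith [hspeed.1], by linarith [hspeed.2]⟩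
  rw [hgeo k x y hx hxy hy]
  calc |(y - x) * d (γ k) (γ (k + 1)) - (y - x)|
      = (y - x) * |d (γ k) (γ (k + 1)) - 1| := by
        rw [← mul_sub_one, abs_mul, abs_of_nonneg (sub_nonneg.2 hxy)]
    _ ≤ 1 * (2 / k) := mul_le_mul (by linarith) hspeed' (abs_nonneg _) zero_le_one
    _ = 2 / k := one_mul _

theorem dist_natCast_le
    (hmid : NatDistBounds d γ)
    (hgeo : GeodesicOnUnitPieces d γ)
    {k n : ℕ} (hk : 1 ≤ k) (hkn : k ≤ n) :
    d (γ k) (γ n) ≤ (n : ℝ) - k + 2 / k := by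
  rcases hkn.eq_or_lt with rfl | hkn
  · have hzero : d (γ k) (γ k) = 0 := by
      simpa using hgeo k k k le_rfl le_rfl (by linarith)
    rw [hzero, sub_self, zero_add]
    positivity
  · exact (hmid k n hk hkn).2

theorem abs_dist_zero_sub_length_le
    (htri : ∀ x y z, d x z ≤ d x y + d y z)
    (hends : ZeroDistBounds d γ)
    (hmid : NatDistBounds d γ)
    (hgeo : GeodesicOnUnitPieces d γ)
    {m : ℕ} (hm : 1 ≤ m) {s : ℝ} (hms : m ≤ s) (hsm : s ≤ m + 1) :
    |d (γ 0) (γ s) - s| ≤ 3 / m := by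
  have hm0 : (0 : ℝ) < m := by exact_mod_cast hm
  have hleft := abs_le.1 (abs_dist_sub_length_le_of_mem_piece hmid hgeo hm le_rfl hms hsm)
  have hright := abs_le.1 (abs_dist_sub_length_le_of_mem_piece hmid hgeo hm hms hsm le_rfl)
  have hend := (hends m hm).2
  have hend' := (hends (m + 1) (by omega)).1
  push_cast at hend'
  have hinv : 1 / ((m : ℝ) + 1) ≤ 1 / m := by gcongr; linarith
  have hup := htri (γ 0) (γ m) (γ s)
  have hlow := htri (γ 0) (γ s) (γ (m + 1))
  have h3 : 3 / (m : ℝ) = 1 / m + 2 / m := by ring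
  rw [abs_le]
  constructor <;> linarith

theorem abs_dist_sub_length_le
    (htri : ∀ x y z, d x z ≤ d x y + d y z)
    (hmid : NatDistBounds d γ)
    (hgeo : GeodesicOnUnitPieces d γ)
    {m : ℕ} (hm : 1 ≤ m) {s t : ℝ} (hms : m ≤ s) (hsm : s ≤ m + 1) (hst : s ≤ t) :
    |d (γ s) (γ t) - (t - s)| ≤ 6 / m := by
  have hm0 : (0 : ℝ) < m := by exact_mod_cast hm
  have h2m : 2 / (m : ℝ) ≤ 6 / m := by gcongr; norm_num
  rcases le_or_gt t (m + 1) with htm | htm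
  · exact (abs_dist_sub_length_le_of_mem_piece hmid hgeo hm hms hst htm).trans h2m
  set p := ⌊t⌋₊
  have hpt : (p : ℝ) ≤ t := Nat.floor_le (by linarith)
  have htp : t ≤ p + 1 := (Nat.lt_floor_add_one t).le
  have hmp : m + 1 ≤ p := Nat.le_floor (by push_cast; linarith)
  have hmpR : (m : ℝ) + 1 ≤ p := by exact_mod_cast hmp
  have hp1 : 1 ≤ p := by omega
  have hinv_p : 2 / (p : ℝ) ≤ 2 / m := by gcongr; linarith
  have hinv_m : 2 / ((m : ℝ) + 1) ≤ 2 / m := by gcongr; linarith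
  have hm_s := abs_le.1 (abs_dist_sub_length_le_of_mem_piece hmid hgeo hm le_rfl hms hsm)
  have hs_m1 := abs_le.1 (abs_dist_sub_length_le_of_mem_piece hmid hgeo hm hms hsm le_rfl)
  have hp_t := abs_le.1 (abs_dist_sub_length_le_of_mem_piece hmid hgeo hp1 le_rfl hpt htp)
  have ht_p1 := abs_le.1 (abs_dist_sub_length_le_of_mem_piece hmid hgeo hp1 hpt htp le_rfl)
  have hm1_p := dist_natCast_le hmid hgeo (by omega : 1 ≤ m + 1) hmp
  have hm_p1 := (hmid m (p + 1) hm (by omega)).1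
  push_cast at hm1_p hm_p1
  have hup₁ := htri (γ s) (γ (m + 1)) (γ t)
  have hup₂ := htri (γ (m + 1)) (γ p) (γ t)
  have hlow₁ := htri (γ m) (γ s) (γ (p + 1))
  have hlow₂ := htri (γ s) (γ t) (γ (p + 1))
  have h6 : 6 / (m : ℝ) = 3 * (2 / m) := by ring
  rw [abs_le]
  constructor <;> linarith

end AlmostGeodesic

theorem stmt_5_general {X : Type*} (d : X → X → ℝ)
    (htri : ∀ x y z, d x z ≤ d x y + d y z)
    (γ : ℝ → X)
    (hends : ∀ n : ℕ, 1 ≤ n →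
      (n : ℝ) - 1 / n ≤ d (γ 0) (γ n) ∧ d (γ 0) (γ n) ≤ (n : ℝ) + 1 / n)
    (hmid : ∀ k n : ℕ, 1 ≤ k → k < n →
      (n : ℝ) - k - 2 / k ≤ d (γ k) (γ n) ∧ d (γ k) (γ n) ≤ (n : ℝ) - k + 2 / k)
    (hgeo : ∀ n : ℕ, ∀ u v : ℝ, (n : ℝ) ≤ u → u ≤ v → v ≤ (n : ℝ) + 1 →
      d (γ u) (γ v) = (v - u) * d (γ n) (γ ((n : ℝ) + 1))) :
    ∀ ε > (0 : ℝ), ∃ t₀ : ℝ, 0 ≤ t₀ ∧ ∀ s t : ℝ, t₀ ≤ s → s ≤ t →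
      |d (γ 0) (γ s) + d (γ s) (γ t) - t| ≤ ε := by
  intro ε hε
  obtain ⟨N, hN⟩ := exists_nat_gt (9 / ε)
  have hN0 : (0 : ℝ) < N := (by positivity : (0 : ℝ) < 9 / ε).trans hN
  refine ⟨N, hN0.le, fun s t hs hst => ?_⟩
  set m := ⌊s⌋₊
  have hNm : N ≤ m := Nat.le_floor hs
  have hm : 1 ≤ m := (Nat.cast_pos.1 hN0).trans_le hNm
  have hms : (m : ℝ) ≤ s := Nat.floor_le (by linarith)
  have hsm : s ≤ m + 1 := (Nat.lt_floor_add_one s).le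
  have h9m : 9 / (m : ℝ) ≤ ε := by
    rw [div_le_iff₀ (by exact_mod_cast hm), ← div_le_iff₀' hε]
    exact hN.le.trans (by exact_mod_cast hNm)
  calc |d (γ 0) (γ s) + d (γ s) (γ t) - t|
      = |(d (γ 0) (γ s) - s) + (d (γ s) (γ t) - (t - s))| := by congr 1; ring
    _ ≤ 3 / m + 6 / m := (abs_add_le _ _).trans (add_le_add
        (abs_dist_zero_sub_length_le htri hends hmid hgeo hm hms hsm)
        (abs_dist_sub_length_le htri hmid hgeo hm hms hsm hst))
    _ = 9 / m := by ring
    _ ≤ ε := h9m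

/-- Let `(X,d)` be an asymmetric metric space and `γ : ℝ≥0 → X` a path such that the points
`γ(n)` (`n ∈ ℕ`) satisfy `n - 1/n ≤ d(γ(0), γ(n)) ≤ n + 1/n` for `n ≥ 1`, and
`n - k - 2/k ≤ d(γ(k), γ(n)) ≤ n - k + 2/k` for `1 ≤ k < n`, and `γ` restricted to each
`[n, n+1]` is a (constant-speed) geodesic from `γ(n)` to `γ(n+1)`. Then `γ` is an almost
geodesic ray. -/
theorem stmt_5 {X : Type*} (d : X → X → ℝ)
    (hnonneg : ∀ x y, 0 ≤ d x y)
    (hsep : ∀ x y, d x y = 0 ↔ x = y)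
    (htri : ∀ x y z, d x z ≤ d x y + d y z)
    (γ : ℝ → X)
    (hends : ∀ n : ℕ, 1 ≤ n →
      (n : ℝ) - 1 / n ≤ d (γ 0) (γ n) ∧ d (γ 0) (γ n) ≤ (n : ℝ) + 1 / n)
    (hmid : ∀ k n : ℕ, 1 ≤ k → k < n →
      (n : ℝ) - k - 2 / k ≤ d (γ k) (γ n) ∧ d (γ k) (γ n) ≤ (n : ℝ) - k + 2 / k)
    (hgeo : ∀ n : ℕ, ∀ u v : ℝ, (n : ℝ) ≤ u → u ≤ v → v ≤ (n : ℝ) + 1 →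
      d (γ u) (γ v) = (v - u) * d (γ n) (γ ((n : ℝ) + 1))) :
    ∀ ε > (0 : ℝ), ∃ t₀ : ℝ, 0 ≤ t₀ ∧ ∀ s t : ℝ, t₀ ≤ s → s ≤ t →
      |d (γ 0) (γ s) + d (γ s) (γ t) - t| ≤ ε :=
  stmt_5_general d htri γ hends hmid hgeo
end

section
/- Any F_N-chain of actions has at most N − 1 non-leaf nodes. That is, if τ is a finite rooted tree whose nodes are labelled by subgroups of F_N with root labelled F_N, such that the children of each non-leaf node labelled H are a set of representatives of conjugacy classes of point stabilizers of a nontrivial minimal very small H-tree with dense H-orbits, then the number of non-leaf nodes of τ is at most N − 1. -/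
/-!
The bound is proved by induction on the chain, in the form `p ≤ n - 1` with truncated
subtraction, which also covers leaves. At a node of rank `n` whose children have ranks `r i`,
rewriting the index inequality as `2 ∑ (r i - 1) + k ≤ 2 n - 2` gives `∑ (r i - 1) ≤ n - 2`,
and the inductive bounds `p i ≤ r i - 1` then give `1 + ∑ p i ≤ n - 1`.
-/

/-- `ChainOfActions n p` : there is an `F_n`-chain of actions (for a free group of rank `n`)
with `p` non-leaf nodes. A leaf (trivial action) contributes no non-leaf node. A non-leaf node
corresponds to a nontrivial minimal very small action with dense orbits of a rank-`n` free group
(hence `n ≥ 2`, since every ℤ-action on a tree with dense orbits is trivial); its children are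
representatives of the conjugacy classes of (nontrivial) point stabilizers, which are free groups
of ranks `r i < n` that satisfy the Gaboriau–Levitt index inequality
`∑ (2 r i - 1) ≤ 2 n - 2`. -/
inductive ChainOfActions : ℕ → ℕ → Prop where
  | leaf (n : ℕ) : ChainOfActions n 0
  | node {n : ℕ} (hn : 2 ≤ n) {k : ℕ} (r p : Fin k → ℕ)
      (hpos : ∀ i, 1 ≤ r i)
      (hrank : ∀ i, r i < n)
      (hGL : (∑ i, (2 * (r i : ℤ) - 1)) ≤ 2 * (n : ℤ) - 2)
      (hchild : ∀ i, ChainOfActions (r i) (p i)) :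
      ChainOfActions n (1 + ∑ i, p i)

theorem sum_sub_one_le_of_sum_two_mul_sub_one_le {ι : Type*} [Fintype ι] {n : ℕ} (hn : 2 ≤ n)
    (r : ι → ℕ) (hGL : ∑ i, (2 * (r i : ℤ) - 1) ≤ 2 * n - 2) :
    ∑ i, ((r i : ℤ) - 1) ≤ n - 2 := by
  have hsplit : ∑ i, (2 * (r i : ℤ) - 1) = 2 * ∑ i, ((r i : ℤ) - 1) + Fintype.card ι := by
    simp only [Finset.sum_sub_distrib, ← Finset.mul_sum, Finset.sum_const, Finset.card_univ,
      nsmul_eq_mul, mul_one]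
    ring
  rcases isEmpty_or_nonempty ι with hι | hι
  · simp only [Finset.univ_eq_empty, Finset.sum_empty]
    omega
  · have hcard : 0 < Fintype.card ι := Fintype.card_pos
    omega

theorem ChainOfActions.le_sub_one {n p : ℕ} (h : ChainOfActions n p) : p ≤ n - 1 := by
  induction h with
  | leaf n => exact Nat.zero_le _
  | @node n hn _ r p hpos _ hGL _ ih =>
    have hchild : ∀ i, (p i : ℤ) ≤ r i - 1 := fun i => by
      have := ih i
      have := hpos i
      omega
    have hsum : ((∑ i, p i : ℕ) : ℤ) ≤ n - 2 := by
      push_cast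
      exact (Finset.sum_le_sum fun i _ => hchild i).trans
        (sum_sub_one_le_of_sum_two_mul_sub_one_le hn r hGL)
    omega

theorem stmt_7_general (N p : ℕ) (h : ChainOfActions N p) : p ≤ N - 1 :=
  h.le_sub_one

/-- Any `F_N`-chain of actions has at most `N - 1` non-leaf nodes. -/
theorem stmt_7 (N p : ℕ) (hN : 1 ≤ N) (h : ChainOfActions N p) : p ≤ N - 1 :=
  stmt_7_general N p h
end

section
/- Let η = Σ_{i=1}^k λ_i [x_1 x_2^i] and η' = Σ_{i=1}^k λ'_i [x_1 x_2^i] be linear combinations of rational geodesic currents on F_N, where x_1, x_2 belong to a common free basis of F_N. If η and η' are translation-equivalent (i.e., ⟨T, η⟩ = ⟨T, η'⟩ for all T in unprojectivized Culler–Vogtmann outer space cv_N), then λ_i = λ'_i for all i, hence η = η'. -/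
/-!
In the Cayley tree of the standard basis with edge lengths `ℓ`, the element `x₁ x₂ⁿ` has
translation length `ℓ₁ + |n| ℓ₂`: the word itself has this length, and no conjugate is shorter,
because the `ℓ`-weighted `ℓ¹`-norm of the (conjugation invariant) abelianization is a lower
bound for the weighted length of any word. Precomposing with the transvections `x₁ ↦ x₁ x₂ᵐ`
and taking all edge lengths `1`, translation equivalence makes `m ↦ ∑ᵢ (λᵢ - λ'ᵢ) |m + i|`
constant on `ℤ`; its second difference at `m = -i` is `2 (λᵢ - λ'ᵢ)`.
-/

/-- The `ℓ`-weighted word length of a reduced word in the free group on `Fin N`. -/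
def wlen {N : ℕ} (ℓ : Fin N → ℝ) (g : FreeGroup (Fin N)) : ℝ :=
  ((FreeGroup.toWord g).map fun p => ℓ p.1).sum

/-- The translation length of `g` in the Cayley tree of `F_N` (with respect to the standard
basis, with edge lengths `ℓ`): the infimum of the weighted word lengths of the conjugates
of `g`. -/
noncomputable def tlen {N : ℕ} (ℓ : Fin N → ℝ) (g : FreeGroup (Fin N)) : ℝ :=
  sInf {r : ℝ | ∃ c : FreeGroup (Fin N), r = wlen ℓ (c * g * c⁻¹)}

open FreeGroup

section Transvection

variable {α : Type*} [DecidableEq α]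

def transvectionHom (i j : α) (m : ℤ) : FreeGroup α →* FreeGroup α :=
  FreeGroup.lift fun a => if a = i then of i * of j ^ m else of a

variable {i j : α}

lemma transvectionHom_of_self (m : ℤ) : transvectionHom i j m (of i) = of i * of j ^ m := by
  rw [transvectionHom, lift_apply_of, if_pos rfl]

lemma transvectionHom_of_of_ne {a : α} (ha : a ≠ i) (m : ℤ) :
    transvectionHom i j m (of a) = of a := by
  rw [transvectionHom, lift_apply_of, if_neg ha]

lemma transvectionHom_of_mul_of_zpow (hij : i ≠ j) (m n : ℤ) :
    transvectionHom i j m (of i * of j ^ n) = of i * of j ^ (m + n) := by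
  rw [_root_.map_mul, _root_.map_zpow, transvectionHom_of_self,
    transvectionHom_of_of_ne hij.symm, mul_assoc, ← zpow_add]

lemma transvectionHom_comp (hij : i ≠ j) (m n : ℤ) :
    (transvectionHom i j m).comp (transvectionHom i j n) = transvectionHom i j (m + n) := by
  refine ext_hom _ _ fun a => ?_
  rcases eq_or_ne a i with rfl | ha
  · rw [MonoidHom.comp_apply, transvectionHom_of_self, transvectionHom_of_mul_of_zpow hij,
      transvectionHom_of_self, add_comm]
  · simp only [MonoidHom.comp_apply, transvectionHom_of_of_ne ha]

lemma transvectionHom_zero (i j : α) : transvectionHom i j 0 = MonoidHom.id _ := by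
  refine ext_hom _ _ fun a => ?_
  rcases eq_or_ne a i with rfl | ha
  · simp [transvectionHom_of_self]
  · simp [transvectionHom_of_of_ne ha]

def transvection (hij : i ≠ j) (m : ℤ) : FreeGroup α ≃* FreeGroup α :=
  (transvectionHom i j m).toMulEquiv (transvectionHom i j (-m))
    (by rw [transvectionHom_comp hij, neg_add_cancel, transvectionHom_zero])
    (by rw [transvectionHom_comp hij, add_neg_cancel, transvectionHom_zero])

lemma transvection_of_mul_of_zpow (hij : i ≠ j) (m n : ℤ) :
    transvection hij m (of i * of j ^ n) = of i * of j ^ (m + n) :=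
  transvectionHom_of_mul_of_zpow hij m n

end Transvection

section SecondDifference

lemma abs_add_one_add_abs_sub_one_sub_two_mul_abs (z : ℤ) :
    |(z : ℝ) + 1| + |(z : ℝ) - 1| - 2 * |(z : ℝ)| = if z = 0 then 2 else 0 := by
  have key : |z + 1| + |z - 1| - 2 * |z| = if z = 0 then 2 else 0 := by
    split_ifs with hz
    · simp [hz]
    · rcases lt_or_gt_of_ne hz with h | h
      · rw [abs_of_nonpos (by omega), abs_of_neg (by omega), abs_of_neg h]; ring
      · rw [abs_of_pos (by omega), abs_of_nonneg (by omega), abs_of_pos h]; ring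
  exact_mod_cast congrArg (Int.cast : ℤ → ℝ) key

theorem eq_zero_of_sum_mul_abs_add_eq_const {ι : Type*} [Fintype ι] {c : ι → ℤ}
    (hc : Function.Injective c) {d : ι → ℝ} {C : ℝ}
    (h : ∀ m : ℤ, ∑ i, d i * |((m + c i : ℤ) : ℝ)| = C) : d = 0 := by
  funext i
  have hdiff : ∑ j, d j * (|((c j - c i : ℤ) : ℝ) + 1| + |((c j - c i : ℤ) : ℝ) - 1|
      - 2 * |((c j - c i : ℤ) : ℝ)|) = 0 := by
    have hsplit : ∀ j, d j * (|((c j - c i : ℤ) : ℝ) + 1| + |((c j - c i : ℤ) : ℝ) - 1|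
        - 2 * |((c j - c i : ℤ) : ℝ)|) = d j * |((-c i + 1 + c j : ℤ) : ℝ)| +
          d j * |((-c i - 1 + c j : ℤ) : ℝ)| - 2 * (d j * |((-c i + c j : ℤ) : ℝ)|) := by
      intro j; push_cast; ring_nf
    rw [Finset.sum_congr rfl fun j _ => hsplit j, Finset.sum_sub_distrib, Finset.sum_add_distrib,
      ← Finset.mul_sum, h, h, h]
    ring
  rw [Finset.sum_eq_single i (fun j _ hji => by
      rw [abs_add_one_add_abs_sub_one_sub_two_mul_abs, if_neg (sub_ne_zero.2 (hc.ne hji)),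
        mul_zero]) (by simp), abs_add_one_add_abs_sub_one_sub_two_mul_abs, sub_self,
    if_pos rfl] at hdiff
  simpa using hdiff

end SecondDifference

section TranslationLength

variable {N : ℕ} {ℓ : Fin N → ℝ}

lemma wlen_nonneg (hℓ : 0 ≤ ℓ) (g : FreeGroup (Fin N)) : 0 ≤ wlen ℓ g :=
  List.sum_nonneg (by simpa using fun a _ => hℓ a)

lemma wlen_mul_le (hℓ : 0 ≤ ℓ) (g h : FreeGroup (Fin N)) :
    wlen ℓ (g * h) ≤ wlen ℓ g + wlen ℓ h := by
  simpa [wlen] using ((toWord_mul_sublist g h).map fun p => ℓ p.1).sum_le_sum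
    (by simp only [List.mem_map]; rintro _ ⟨p, -, rfl⟩; exact hℓ _)

lemma wlen_inv (g : FreeGroup (Fin N)) : wlen ℓ g⁻¹ = wlen ℓ g := by
  simp [wlen, toWord_inv, invRev, List.sum_reverse, Function.comp_def]

lemma wlen_of_zpow (i : Fin N) (n : ℤ) : wlen ℓ (of i ^ n) = |(n : ℝ)| * ℓ i := by
  have hpow : ∀ m : ℕ, wlen ℓ (of i ^ m) = m * ℓ i := fun m => by
    simp [wlen, toWord_of_pow]
  rcases n with m | m
  · simp [hpow]
  · rw [zpow_negSucc, wlen_inv, hpow, Int.cast_negSucc, abs_neg]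
    norm_cast

lemma tlen_le_wlen (hℓ : 0 ≤ ℓ) (g : FreeGroup (Fin N)) : tlen ℓ g ≤ wlen ℓ g :=
  csInf_le ⟨0, fun _ ⟨_, hc⟩ => hc ▸ wlen_nonneg hℓ _⟩ ⟨1, by simp⟩

def expSum : FreeGroup (Fin N) →* Multiplicative (Fin N → ℤ) :=
  FreeGroup.lift fun i => Multiplicative.ofAdd (Pi.single i 1)

def wnorm (ℓ : Fin N → ℝ) (v : Fin N → ℤ) : ℝ :=
  ∑ j, ℓ j * |(v j : ℝ)|

lemma wnorm_add_le (hℓ : 0 ≤ ℓ) (u v : Fin N → ℤ) :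
    wnorm ℓ (u + v) ≤ wnorm ℓ u + wnorm ℓ v := by
  simp only [wnorm, ← Finset.sum_add_distrib, ← mul_add]
  refine Finset.sum_le_sum fun j _ => mul_le_mul_of_nonneg_left ?_ (hℓ j)
  rw [Pi.add_apply, Int.cast_add]
  exact abs_add_le _ _

lemma wnorm_single (i : Fin N) (s : ℤ) : wnorm ℓ (Pi.single i s) = ℓ i * |(s : ℝ)| := by
  rw [wnorm, Fintype.sum_eq_single i fun j hj => by simp [hj]]
  simp

lemma expSum_conj (c g : FreeGroup (Fin N)) : expSum (c * g * c⁻¹) = expSum g := by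
  rw [_root_.map_mul, _root_.map_mul, _root_.map_inv, mul_inv_cancel_comm]

lemma wnorm_expSum_mk_le (hℓ : 0 ≤ ℓ) (L : List (Fin N × Bool)) :
    wnorm ℓ (expSum (mk L)).toAdd ≤ (L.map fun p => ℓ p.1).sum := by
  induction L with
  | nil => simp [wnorm, expSum]
  | cons x L ih =>
    have hx : (expSum (mk [x])).toAdd = Pi.single x.1 (if x.2 then 1 else -1) := by
      rcases x with ⟨a, _ | _⟩ <;> simp [expSum, lift_mk, Pi.single_neg]
    calc wnorm ℓ (expSum (mk (x :: L))).toAdd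
        = wnorm ℓ ((expSum (mk [x])).toAdd + (expSum (mk L)).toAdd) := by
          rw [← toAdd_mul, ← _root_.map_mul, mul_mk, List.singleton_append]
      _ ≤ wnorm ℓ (expSum (mk [x])).toAdd + wnorm ℓ (expSum (mk L)).toAdd := wnorm_add_le hℓ _ _
      _ ≤ ℓ x.1 + (L.map fun p => ℓ p.1).sum := by
          rw [hx, wnorm_single]
          split_ifs <;> simpa using ih
      _ = ((x :: L).map fun p => ℓ p.1).sum := by simp

lemma wnorm_expSum_le_wlen (hℓ : 0 ≤ ℓ) (g : FreeGroup (Fin N)) :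
    wnorm ℓ (expSum g).toAdd ≤ wlen ℓ g := by
  have h := wnorm_expSum_mk_le hℓ (toWord g)
  rwa [mk_toWord] at h

lemma wnorm_expSum_le_tlen (hℓ : 0 ≤ ℓ) (g : FreeGroup (Fin N)) :
    wnorm ℓ (expSum g).toAdd ≤ tlen ℓ g :=
  le_csInf ⟨wlen ℓ g, 1, by simp⟩ fun _ ⟨c, hc⟩ =>
    hc ▸ expSum_conj c g ▸ wnorm_expSum_le_wlen hℓ _

lemma tlen_of_mul_of_zpow (hℓ : 0 ≤ ℓ) {i j : Fin N} (hij : i ≠ j) (n : ℤ) :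
    tlen ℓ (of i * of j ^ n) = ℓ i + |(n : ℝ)| * ℓ j := by
  refine le_antisymm ((tlen_le_wlen hℓ _).trans ?_) (le_trans (le_of_eq ?_)
    (wnorm_expSum_le_tlen hℓ _))
  · refine (wlen_mul_le hℓ _ _).trans_eq ?_
    rw [wlen_of_zpow]
    simp [wlen, toWord_of]
  · have : (expSum (of i * of j ^ n)).toAdd = Pi.single i 1 + Pi.single j n := by
      ext a; simp [expSum, Pi.single_apply]
    rw [this, wnorm, Fintype.sum_eq_add i j hij fun a ha => by simp [ha.1, ha.2]]
    simp [hij, hij.symm, mul_comm]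

end TranslationLength

/-- Let `η = ∑ λ_i [x₁x₂^i]` and `η' = ∑ λ'_i [x₁x₂^i]` be linear combinations of rational
currents, where `x₁ = of 0`, `x₂ = of 1` belong to the standard free basis of `F_N`. If `η` and
`η'` are translation-equivalent, i.e. they give the same value on every tree of unprojectivized
outer space — in particular on every Cayley tree of a free basis `φ⁻¹(standard basis)` with
arbitrary positive edge lengths `ℓ` — then `λ_i = λ'_i` for all `i`, hence `η = η'`. -/
theorem stmt_10 (N : ℕ) (hN : 2 ≤ N) (k : ℕ) (lam lam' : Fin k → ℝ)
    (x₁ x₂ : FreeGroup (Fin N))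
    (hx₁ : x₁ = FreeGroup.of ⟨0, by omega⟩) (hx₂ : x₂ = FreeGroup.of ⟨1, by omega⟩)
    (tequiv : ∀ (φ : FreeGroup (Fin N) ≃* FreeGroup (Fin N)) (ℓ : Fin N → ℝ),
      (∀ j, 0 < ℓ j) →
      ∑ i : Fin k, lam i * tlen ℓ (φ (x₁ * x₂ ^ ((i : ℕ) + 1))) =
        ∑ i : Fin k, lam' i * tlen ℓ (φ (x₁ * x₂ ^ ((i : ℕ) + 1)))) :
    ∀ i, lam i = lam' i := by
  subst hx₁ hx₂
  have h01 : (⟨0, by omega⟩ : Fin N) ≠ ⟨1, by omega⟩ := by simp [Fin.ext_iff]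
  have htlen : ∀ (m : ℤ) (i : Fin k),
      tlen 1 (transvection h01 m (of ⟨0, by omega⟩ * of ⟨1, by omega⟩ ^ ((i : ℕ) + 1))) =
        1 + |((m + ((i : ℕ) + 1) : ℤ) : ℝ)| := fun m i => by
    rw [← zpow_natCast, transvection_of_mul_of_zpow, tlen_of_mul_of_zpow zero_le_one h01]
    simp only [Pi.one_apply, mul_one, Nat.cast_add, Nat.cast_one]
  have hconst : ∀ m : ℤ, ∑ i, (lam i - lam' i) * |((m + ((i : ℕ) + 1) : ℤ) : ℝ)| =
      -∑ i, (lam i - lam' i) := fun m => by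
    have h := tequiv (transvection h01 m) 1 fun _ => one_pos
    simp only [htlen] at h
    have hdiff : ∑ i, (lam i - lam' i) * (1 + |((m + ((i : ℕ) + 1) : ℤ) : ℝ)|) = 0 := by
      simp only [sub_mul, Finset.sum_sub_distrib, h, sub_self]
    simp only [mul_add, mul_one, Finset.sum_add_distrib] at hdiff
    linarith
  have hinj : Function.Injective fun i : Fin k => ((i : ℕ) + 1 : ℤ) := fun i j h => by
    simpa [Fin.ext_iff] using h
  intro i
  exact sub_eq_zero.1 (congrFun (eq_zero_of_sum_mul_abs_add_eq_const hinj hconst) i)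
end

section
/- Let G be a countable group, μ a probability measure on G, and ν a μ-stationary Borel probability measure on a compact G-space X. Let D be a countable G-set and Θ : X → D a measurable G-equivariant map. If E ⊆ X is a G-invariant measurable subset with ν(E) > 0, then Θ(E) contains a finite orbit of the subgroup generated by the support of μ. -/
open MeasureTheory
open scoped ENNReal Pointwise

/-!
The masses `f d = ν (E ∩ Θ⁻¹{d})` of the fibres of `Θ` over `E` form a summable function on `D`
which is `μ`-harmonic: `f d = ∑ μ g f (g⁻¹ d)`, because `E` is invariant and `Θ` equivariant.
Summability makes `f` attain its maximum `M > 0`, and `M` is a weighted average of values `≤ M`,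
so the finite set `{f = M}` is mapped into itself by every `g⁻¹` with `μ g ≠ 0`, hence is
invariant under `gr(μ)`. A point of `E` over a maximiser has a finite `gr(μ)`-orbit in `D`.
-/

namespace ENNReal

theorem exists_forall_le_of_tsum_ne_top {ι : Type*} {f : ι → ℝ≥0∞} (hf : ∑' i, f i ≠ ∞)
    {i₀ : ι} (hi₀ : f i₀ ≠ 0) : ∃ i, ∀ j, f j ≤ f i := by
  have hfin : {j | f i₀ ≤ f j}.Finite := finite_const_le_of_tsum_ne_top hf hi₀
  obtain ⟨i, hi, hmax⟩ := Set.exists_max_image _ f hfin ⟨i₀, le_refl (f i₀)⟩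
  refine ⟨i, fun j => ?_⟩
  by_cases hj : f i₀ ≤ f j
  · exact hmax j hj
  · exact (not_le.mp hj).le.trans hi

theorem eq_of_tsum_mul_eq {ι : Type*} {w a : ι → ℝ≥0∞} {M : ℝ≥0∞} (hw : ∑' i, w i = 1)
    (hM : M ≠ ∞) (ha : ∀ i, a i ≤ M) (h : ∑' i, w i * a i = M) {i : ι} (hi : w i ≠ 0) :
    a i = M := by
  by_contra hne
  have hwi : w i ≠ ∞ := ne_top_of_le_ne_top one_ne_top (hw ▸ ENNReal.le_tsum i)
  have hlt : ∑' j, w j * a j < ∑' j, w j * M :=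
    tsum_lt_tsum (h ▸ hM) (fun j => by gcongr; exact ha j)
      (ENNReal.mul_lt_mul_right hi hwi (lt_of_le_of_ne (ha i) hne))
  rw [h, ENNReal.tsum_mul_right, hw, one_mul] at hlt
  exact lt_irrefl M hlt

end ENNReal

theorem Set.Finite.closure_le_stabilizer {G α : Type*} [Group G] [MulAction G α] {S : Set α}
    (hS : S.Finite) {T : Set G} (hT : ∀ g ∈ T, g • S ⊆ S) :
    Subgroup.closure T ≤ MulAction.stabilizer G S :=
  (Subgroup.closure_le _).mpr fun g hg =>
    MulAction.mem_stabilizer_iff.mpr <|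
      Set.eq_of_subset_of_ncard_le (hT g hg) (Set.ncard_smul_set g S).ge hS

theorem exists_finite_orbit_of_harmonic {G D : Type*} [Group G] [MulAction G D]
    {μ : G → ℝ≥0∞} (hμ : ∑' g, μ g = 1) {f : D → ℝ≥0∞} (hf : ∑' d, f d ≠ ∞)
    (hharm : ∀ d, f d = ∑' g, μ g * f (g⁻¹ • d)) {d₁ : D} (hd₁ : f d₁ ≠ 0) :
    ∃ d, f d ≠ 0 ∧ {e | ∃ g ∈ Subgroup.closure {g | μ g ≠ 0}, e = g • d}.Finite := by
  obtain ⟨d₀, hmax⟩ := ENNReal.exists_forall_le_of_tsum_ne_top hf hd₁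
  have hM : f d₀ ≠ 0 := ne_bot_of_le_ne_bot hd₁ (hmax d₁)
  have hMtop : f d₀ ≠ ∞ := ne_top_of_le_ne_top hf (ENNReal.le_tsum d₀)
  set S := {d | f d = f d₀}
  have hSfin : S.Finite :=
    (ENNReal.finite_const_le_of_tsum_ne_top hf hM).subset fun d hd => hd.ge
  have hSstable : ∀ g ∈ {g : G | μ g ≠ 0}⁻¹, g • S ⊆ S := by
    rintro g hg _ ⟨d, hd, rfl⟩
    show f (g • d) = f d₀
    simpa using ENNReal.eq_of_tsum_mul_eq (a := fun g => f (g⁻¹ • d)) hμ hMtop (fun _ => hmax _)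
      ((hharm d).symm.trans hd) hg
  have hstab := hSfin.closure_le_stabilizer hSstable
  rw [Subgroup.closure_inv] at hstab
  refine ⟨d₀, hM, hSfin.subset ?_⟩
  rintro _ ⟨g, hg, rfl⟩
  rw [← MulAction.mem_stabilizer_iff.mp (hstab hg)]
  exact Set.smul_mem_smul_set rfl

section Fibres

variable {G X D : Type*} [Group G] [MulAction G X] [MulAction G D] {Θ : X → D} {E : Set X}

theorem preimage_smul_fibre_inter (hΘ : ∀ (g : G) (x : X), Θ (g • x) = g • Θ x)
    (hE : ∀ g : G, (fun x => g • x) ⁻¹' E = E) (g : G) (d : D) :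
    (fun x => g • x) ⁻¹' (Θ ⁻¹' {d} ∩ E) = Θ ⁻¹' {g⁻¹ • d} ∩ E := by
  rw [Set.preimage_inter, hE g]
  ext x
  simp only [Set.mem_inter_iff, Set.mem_preimage, Set.mem_singleton_iff, hΘ,
    eq_inv_smul_iff]

variable [MeasurableSpace X] [MeasurableSpace D] [MeasurableSingletonClass D]

theorem restrict_fibre_harmonic (μ : G → ℝ≥0∞) (ν : Measure X)
    (hstat : ∀ s : Set X, MeasurableSet s → ν s = ∑' g : G, μ g * ν ((fun x => g • x) ⁻¹' s))
    (hΘmeas : Measurable Θ) (hΘ : ∀ (g : G) (x : X), Θ (g • x) = g • Θ x)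
    (hEmeas : MeasurableSet E) (hE : ∀ g : G, (fun x => g • x) ⁻¹' E = E) (d : D) :
    ν.restrict E (Θ ⁻¹' {d}) = ∑' g, μ g * ν.restrict E (Θ ⁻¹' {g⁻¹ • d}) := by
  have hfibre : ∀ d : D, MeasurableSet (Θ ⁻¹' {d}) := fun d => hΘmeas (.singleton d)
  simp only [Measure.restrict_apply (hfibre _), ← preimage_smul_fibre_inter hΘ hE]
  exact hstat _ ((hfibre d).inter hEmeas)

end Fibres

theorem stmt_14_general {G : Type*} [Group G]
    {X : Type*} [MeasurableSpace X]
    [MulAction G X]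
    {D : Type*} [Countable D] [MulAction G D] [MeasurableSpace D] [MeasurableSingletonClass D]
    (μ : G → ENNReal) (hμ : (∑' g : G, μ g) = 1)
    (ν : Measure X) [IsProbabilityMeasure ν]
    (hstat : ∀ s : Set X, MeasurableSet s → ν s = ∑' g : G, μ g * ν ((fun x => g • x) ⁻¹' s))
    (Θ : X → D) (hΘmeas : Measurable Θ)
    (hΘequiv : ∀ (g : G) (x : X), Θ (g • x) = g • Θ x)
    (E : Set X) (hEmeas : MeasurableSet E)
    (hEinv : ∀ g : G, (fun x => g • x) ⁻¹' E = E)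
    (hEpos : 0 < ν E) :
    ∃ x ∈ E, Set.Finite
      {e : D | ∃ g ∈ Subgroup.closure {g : G | μ g ≠ 0}, e = g • Θ x} := by
  have hfibre : ∀ d : D, MeasurableSet (Θ ⁻¹' {d}) := fun d => hΘmeas (.singleton d)
  have hsum : ∑' d, ν.restrict E (Θ ⁻¹' {d}) ≠ ∞ :=
    ne_top_of_le_ne_top (measure_ne_top _ Set.univ) <|
      tsum_measure_le_measure_univ (fun d => (hfibre d).nullMeasurableSet)
        fun _ _ h => (Set.pairwiseDisjoint_fiber Θ Set.univ trivial trivial h).aedisjoint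
  obtain ⟨d₁, -, hd₁⟩ : ∃ d ∈ Set.univ, ν.restrict E (Θ ⁻¹' {d}) ≠ 0 := by
    by_contra! h
    rw [← measure_preimage_eq_zero_iff_of_countable Set.countable_univ, Set.preimage_univ,
      Measure.restrict_apply_univ] at h
    exact hEpos.ne' h
  obtain ⟨d, hd, hfin⟩ := exists_finite_orbit_of_harmonic hμ hsum
    (restrict_fibre_harmonic μ ν hstat hΘmeas hΘequiv hEmeas hEinv) hd₁
  rw [Measure.restrict_apply (hfibre d)] at hd
  obtain ⟨x, hxd, hxE⟩ := nonempty_of_measure_ne_zero hd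
  exact ⟨x, hxE, by rwa [show Θ x = d from hxd]⟩

/-- Maximum principle (Ballmann, Woess, Kaimanovich–Masur): let `G` be a countable group, `μ` a
probability measure on `G` (given by its weights), `ν` a `μ`-stationary Borel probability measure
on a compact `G`-space `X`, `D` a countable `G`-set and `Θ : X → D` a measurable `G`-equivariant
map. If `E ⊆ X` is a `G`-invariant measurable subset with `ν(E) > 0`, then `Θ(E)` contains a
point whose orbit under the subgroup generated by the support of `μ` is finite. -/
theorem stmt_14 {G : Type*} [Group G] [Countable G]
    {X : Type*} [TopologicalSpace X] [CompactSpace X] [MeasurableSpace X] [BorelSpace X]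
    [MulAction G X]
    {D : Type*} [Countable D] [MulAction G D] [MeasurableSpace D] [MeasurableSingletonClass D]
    (μ : G → ENNReal) (hμ : (∑' g : G, μ g) = 1)
    (ν : Measure X) [IsProbabilityMeasure ν]
    (hstat : ∀ s : Set X, MeasurableSet s → ν s = ∑' g : G, μ g * ν ((fun x => g • x) ⁻¹' s))
    (Θ : X → D) (hΘmeas : Measurable Θ)
    (hΘequiv : ∀ (g : G) (x : X), Θ (g • x) = g • Θ x)
    (E : Set X) (hEmeas : MeasurableSet E)
    (hEinv : ∀ g : G, (fun x => g • x) ⁻¹' E = E)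
    (hEpos : 0 < ν E) :
    ∃ x ∈ E, Set.Finite
      {e : D | ∃ g ∈ Subgroup.closure {g : G | μ g ≠ 0}, e = g • Θ x} :=
  stmt_14_general μ hμ ν hstat Θ hΘmeas hΘequiv E hEmeas hEinv hEpos
end

section
/- Let (Ω, P) be a probability space with ergodic measure-preserving transformation T, let G act by isometries on an asymmetric metric space (X,d) with basepoint b, and let Φ_n(ω) = φ(T^{n-1}ω)···φ(ω) be an integrable ergodic cocycle with drift l = lim (1/n) d(b, Φ_n(ω)^{-1} b). Suppose for a.e. ω there is a point z (in the horoboundary, represented by a length function ||·||_z on F_N and constant C(ω)^{-1} = sup_{g≠e} ||g||_z / ||g||_b) such that the horofunction estimate ψ_z(Φ_n^{-1} b) ≤ −(l−ε)n holds for n large. Then for every g ∈ F_N and for n large: C(ω)·||g||_z·e^{(l−ε)n} ≤ ||Φ_n(g)||_b ≤ ||g||_b·e^{(l+ε)n}, where ||h||_b denotes translation length in the base tree b. -/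
/-!
Both bounds are read off from a single element of the two suprema of length ratios: `‖g‖_z / ‖Φₙ g‖_b`
is at most `exp ψ_z(Φₙ⁻¹ b) · C⁻¹ ≤ C⁻¹ e^{-(l-ε)n}`, and `‖Φₙ g‖_b / ‖g‖_b` is at most
`exp d(b, Φₙ⁻¹ b) ≤ e^{(l+ε)n}`.
-/

open Real

section LengthRatios

variable {G : Type*} [Group G]

def lengthRatios (ℓ₁ ℓ₂ : G → ℝ) : Set ℝ := {r | ∃ g, g ≠ 1 ∧ r = ℓ₁ g / ℓ₂ g}

lemma le_mul_exp_of_log_sSup_lengthRatios_le {ℓ₁ ℓ₂ : G → ℝ} {c : ℝ} {g : G} (hg : g ≠ 1)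
    (hpos : 0 < ℓ₂ g) (hbdd : BddAbove (lengthRatios ℓ₁ ℓ₂))
    (hlog : log (sSup (lengthRatios ℓ₁ ℓ₂)) ≤ c) :
    ℓ₁ g ≤ ℓ₂ g * exp c := by
  have hratio : ℓ₁ g / ℓ₂ g ≤ exp c :=
    (le_csSup hbdd ⟨g, hg, rfl⟩).trans (le_exp_of_log_le hlog)
  rwa [div_le_iff₀ hpos, mul_comm] at hratio

end LengthRatios

lemma mul_mul_exp_le_of_le_mul_exp_log_inv_sub {a b C t : ℝ} (hC : 0 < C)
    (h : a ≤ b * exp (log C⁻¹ - t)) : C * a * exp t ≤ b := by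
  rw [exp_sub, exp_log (inv_pos.mpr hC), div_eq_mul_inv, ← exp_neg] at h
  calc C * a * exp t ≤ C * (b * (C⁻¹ * exp (-t))) * exp t := by gcongr
    _ = b * (C * C⁻¹) * (exp (-t) * exp t) := by ring
    _ = b := by rw [mul_inv_cancel₀ hC.ne', ← exp_add, neg_add_cancel, exp_zero]; ring

theorem stmt_16_general (N : ℕ)
    (ℓb ℓz : FreeGroup (Fin N) → ℝ)
    (Φ : ℕ → (FreeGroup (Fin N) ≃* FreeGroup (Fin N)))
    (l C : ℝ) (hC : 0 < C)
    (hb1 : ℓb 1 = 0) (hz1 : ℓz 1 = 0)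
    (hbpos : ∀ g, g ≠ 1 → 0 < ℓb g)
    (hbddz : ∀ n, BddAbove {r : ℝ | ∃ g, g ≠ (1 : FreeGroup (Fin N)) ∧ r = ℓz g / ℓb (Φ n g)})
    (hbddb : ∀ n, BddAbove {r : ℝ | ∃ g, g ≠ (1 : FreeGroup (Fin N)) ∧ r = ℓb (Φ n g) / ℓb g})
    (hhoro : ∀ ε > (0 : ℝ), ∃ n₀ : ℕ, ∀ n ≥ n₀,
      Real.log (sSup {r : ℝ | ∃ g, g ≠ (1 : FreeGroup (Fin N)) ∧ r = ℓz g / ℓb (Φ n g)})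
        - Real.log C⁻¹ ≤ -((l - ε) * n))
    (hdrift : ∀ ε > (0 : ℝ), ∃ n₀ : ℕ, ∀ n ≥ n₀,
      Real.log (sSup {r : ℝ | ∃ g, g ≠ (1 : FreeGroup (Fin N)) ∧ r = ℓb (Φ n g) / ℓb g})
        ≤ (l + ε) * n) :
    ∀ ε > (0 : ℝ), ∃ n₀ : ℕ, ∀ n ≥ n₀, ∀ g : FreeGroup (Fin N),
      C * ℓz g * Real.exp ((l - ε) * n) ≤ ℓb (Φ n g) ∧
      ℓb (Φ n g) ≤ ℓb g * Real.exp ((l + ε) * n) := by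
  intro ε hε
  obtain ⟨n₁, hn₁⟩ := hhoro ε hε
  obtain ⟨n₂, hn₂⟩ := hdrift ε hε
  refine ⟨max n₁ n₂, fun n hn g => ?_⟩
  rcases eq_or_ne g 1 with rfl | hg
  · simp [hb1, hz1]
  constructor
  · refine mul_mul_exp_le_of_le_mul_exp_log_inv_sub hC ?_
    refine le_mul_exp_of_log_sSup_lengthRatios_le (ℓ₂ := fun g => ℓb (Φ n g)) hg
      (hbpos _ ((Φ n).map_ne_one_iff.mpr hg)) (hbddz n) ?_
    unfold lengthRatios
    linarith [hn₁ n (le_of_max_le_left hn)]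
  · exact le_mul_exp_of_log_sSup_lengthRatios_le (ℓ₁ := fun g => ℓb (Φ n g)) hg (hbpos g hg)
      (hbddb n) (hn₂ n (le_of_max_le_right hn))

/-- Quantitative growth estimate along a cocycle of automorphisms of `F_N`. Here `ℓb` is the
translation length function of the base tree `b` (so `‖Φₙ(g)‖_b = ‖g‖_{Φₙ⁻¹b} = ℓb (Φₙ g)`),
`ℓz` is the translation length function of a representative of the limiting horofunction `z`,
`l` is the drift, and `C⁻¹ = sup_{g ≠ e} ‖g‖_z / ‖g‖_b`. Assuming the horofunction estimate
`ψ_z(Φₙ⁻¹ b) ≤ -(l-ε) n` for large `n` (expressed through `log` of the supremum of the length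
ratios), and the drift estimate `d(b, Φₙ⁻¹ b) ≤ (l+ε) n` for large `n`, we get for all `ε > 0`,
all large `n` and every `g ∈ F_N`:
`C ‖g‖_z e^{(l-ε)n} ≤ ‖Φₙ(g)‖_b ≤ ‖g‖_b e^{(l+ε)n}`. -/
theorem stmt_16 (N : ℕ)
    (ℓb ℓz : FreeGroup (Fin N) → ℝ)
    (Φ : ℕ → (FreeGroup (Fin N) ≃* FreeGroup (Fin N)))
    (l C : ℝ) (hl : 0 < l) (hC : 0 < C)
    (hb1 : ℓb 1 = 0) (hz1 : ℓz 1 = 0)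
    (hbpos : ∀ g, g ≠ 1 → 0 < ℓb g) (hznn : ∀ g, 0 ≤ ℓz g)
    (hCdef : IsLUB {r : ℝ | ∃ g, g ≠ (1 : FreeGroup (Fin N)) ∧ r = ℓz g / ℓb g} C⁻¹)
    (hbddz : ∀ n, BddAbove {r : ℝ | ∃ g, g ≠ (1 : FreeGroup (Fin N)) ∧ r = ℓz g / ℓb (Φ n g)})
    (hbddb : ∀ n, BddAbove {r : ℝ | ∃ g, g ≠ (1 : FreeGroup (Fin N)) ∧ r = ℓb (Φ n g) / ℓb g})
    (hhoro : ∀ ε > (0 : ℝ), ∃ n₀ : ℕ, ∀ n ≥ n₀,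
      Real.log (sSup {r : ℝ | ∃ g, g ≠ (1 : FreeGroup (Fin N)) ∧ r = ℓz g / ℓb (Φ n g)})
        - Real.log C⁻¹ ≤ -((l - ε) * n))
    (hdrift : ∀ ε > (0 : ℝ), ∃ n₀ : ℕ, ∀ n ≥ n₀,
      Real.log (sSup {r : ℝ | ∃ g, g ≠ (1 : FreeGroup (Fin N)) ∧ r = ℓb (Φ n g) / ℓb g})
        ≤ (l + ε) * n) :
    ∀ ε > (0 : ℝ), ∃ n₀ : ℕ, ∀ n ≥ n₀, ∀ g : FreeGroup (Fin N),
      C * ℓz g * Real.exp ((l - ε) * n) ≤ ℓb (Φ n g) ∧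
      ℓb (Φ n g) ≤ ℓb g * Real.exp ((l + ε) * n) :=
  stmt_16_general N ℓb ℓz Φ l C hC hb1 hz1 hbpos hbddz hbddb hhoro hdrift
end
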